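/- arXiv:2602.03102 — 2 statements merged into one kernel-verified Lean document; each statement's English description precedes it below -/
import Mathlib

section
/- MBR-Gradient Proportionality (Dr.GRPO version): Let y_1,...,y_G be i.i.d. samples from π_old on a finite set Y, G ≥ 2, and let u : Y → ℝ. Define the Dr.GRPO estimator at sample i as ĝ_i = ρ_i(θ)·∇_θ log π_θ(y_i)·(u(y_i) − μ_G), where ρ_i(θ) = π_θ(y_i)/π_old(y_i) and μ_G is the group mean of u. Then E[ĝ_i] = ((G−1)/G)·∇_θ E_{y ∼ π_θ}[u(y)]. -/
/-!
After cancelling `ρ_i` against the score `∇π_θ(y_i) / π_θ(y_i)`, the estimator is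
`(u(y_i) - μ_G) • w(y_i)` with `w = ∇π_θ / π_old`, and `E_{π_old}[w] = ∇ ∑_y π_θ(y) = 0`.
In `μ_G`, every term `u(y_j)` with `j ≠ i` is independent of `y_i`, so its contribution factorises
through `E[w] = 0`; only the term `u(y_i) / G` survives, leaving `(1 - 1/G) E_{π_old}[u w]`, and
`E_{π_old}[u w] = ∇ E_{π_θ}[u]`.
-/

open Finset

section IidSums

variable {ι Y R M : Type*} [Fintype ι] [DecidableEq ι] [Fintype Y]
  [CommSemiring R] [AddCommMonoid M] [Module R M]

theorem sum_prod_smul_eq_sum_smul_sum_subtype_ne (p : Y → R) (i : ι)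
    (F : Y → ({j // j ≠ i} → Y) → M) :
    ∑ ys : ι → Y, (∏ l, p (ys l)) • F (ys i) (fun j => ys j)
      = ∑ a, p a • ∑ zs : {j // j ≠ i} → Y, (∏ j, p (zs j)) • F a zs := by
  rw [← (Equiv.funSplitAt i Y).symm.sum_comp, Fintype.sum_prod_type]
  refine sum_congr rfl fun a _ => ?_
  rw [smul_sum]
  refine sum_congr rfl fun zs _ => ?_
  have hzs : ∀ j : {j // j ≠ i}, (Equiv.funSplitAt i Y).symm (a, zs) j = zs j := fun j => by
    simp [j.2]
  simp only [Fintype.prod_eq_mul_prod_subtype_ne _ i, mul_smul, hzs]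
  simp

theorem sum_prod_smul_apply {p : Y → R} (hp : ∑ y, p y = 1) (i : ι) (f : Y → M) :
    ∑ ys : ι → Y, (∏ l, p (ys l)) • f (ys i) = ∑ y, p y • f y := by
  have hmass : ∑ zs : {j // j ≠ i} → Y, ∏ j, p (zs j) = 1 := by
    rw [← Fintype.prod_sum, hp, prod_const_one]
  simp only [sum_prod_smul_eq_sum_smul_sum_subtype_ne p i fun a _ => f a, ← sum_smul, hmass,
    one_smul]

theorem sum_prod_smul_smul_apply_of_ne {p : Y → R} (hp : ∑ y, p y = 1) {i j : ι} (hji : j ≠ i)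
    (g : Y → R) (f : Y → M) :
    ∑ ys : ι → Y, (∏ l, p (ys l)) • (g (ys j) • f (ys i))
      = (∑ y, p y * g y) • ∑ y, p y • f y := by
  have hinner : ∀ a, ∑ zs : {j // j ≠ i} → Y, (∏ l, p (zs l)) • (g (zs ⟨j, hji⟩) • f a)
      = (∑ y, p y * g y) • f a := fun a => by
    simp only [← smul_assoc, ← sum_smul]
    rw [sum_prod_smul_apply hp (⟨j, hji⟩ : {j // j ≠ i}) g]
    simp only [smul_eq_mul]
  rw [sum_prod_smul_eq_sum_smul_sum_subtype_ne p i fun a zs => g (zs ⟨j, hji⟩) • f a]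
  simp only [hinner, smul_comm (p _), ← smul_sum]

end IidSums

section GroupBaseline

variable {ι Y M : Type*} [Fintype ι] [DecidableEq ι] [Fintype Y] [AddCommGroup M] [Module ℝ M]

theorem sum_prod_smul_sub_groupMean_smul {p : Y → ℝ} (hp : ∑ y, p y = 1) {w : Y → M}
    (hw : ∑ y, p y • w y = 0) (u : Y → ℝ) (i : ι) :
    ∑ ys : ι → Y, (∏ l, p (ys l)) •
        ((u (ys i) - (1 / (Fintype.card ι : ℝ)) * ∑ j, u (ys j)) • w (ys i))
      = (((Fintype.card ι : ℝ) - 1) / Fintype.card ι) • ∑ y, p y • u y • w y := by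
  have hcross : ∀ j, ∑ ys : ι → Y, (∏ l, p (ys l)) • (u (ys j) • w (ys i))
      = if j = i then ∑ y, p y • u y • w y else 0 := by
    intro j
    split_ifs with hji
    · subst hji
      exact sum_prod_smul_apply hp j fun y => u y • w y
    · rw [sum_prod_smul_smul_apply_of_ne hp hji, hw, smul_zero]
  have hcard : (Fintype.card ι : ℝ) ≠ 0 := Nat.cast_ne_zero.mpr (Fintype.card_pos_iff.mpr ⟨i⟩).ne'
  calc _ = ∑ ys : ι → Y, (∏ l, p (ys l)) • (u (ys i) • w (ys i))
        - (1 / (Fintype.card ι : ℝ)) •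
            ∑ j, ∑ ys : ι → Y, (∏ l, p (ys l)) • (u (ys j) • w (ys i)) := by
        simp only [sub_smul, smul_sub, sum_sub_distrib, mul_smul, sum_smul, smul_sum]
        rw [sum_comm (s := univ) (t := univ)]
        simp only [smul_comm _ (1 / (Fintype.card ι : ℝ))]
    _ = (1 - 1 / (Fintype.card ι : ℝ)) • ∑ y, p y • u y • w y := by
        rw [sum_prod_smul_apply hp i fun y => u y • w y, sum_congr rfl fun j _ => hcross j,
          sum_ite_eq', if_pos (mem_univ i), sub_smul, one_smul]
    _ = _ := by rw [one_sub_div hcard]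

end GroupBaseline

theorem sum_fderiv_eq_zero_of_sum_eq {𝕜 E Y : Type*} [NontriviallyNormedField 𝕜]
    [NormedAddCommGroup E] [NormedSpace 𝕜 E] [Fintype Y] {π : E → Y → 𝕜} {c : 𝕜} {θ : E}
    (hdiff : ∀ y, DifferentiableAt 𝕜 (fun t => π t y) θ) (hsum : ∀ t, ∑ y, π t y = c) :
    ∑ y, fderiv 𝕜 (fun t => π t y) θ = 0 := by
  rw [← fderiv_fun_sum fun y _ => hdiff y]
  simp only [hsum, fderiv_const_apply]

theorem drgrpo_gradient_proportionality_general {Y : Type*} [Fintype Y] {d : ℕ}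
    (G : ℕ)
    (pold : Y → ℝ) (hpold : ∀ y, 0 < pold y) (hpsum : ∑ y, pold y = 1)
    (π : (Fin d → ℝ) → Y → ℝ) (hπpos : ∀ θ y, 0 < π θ y)
    (hπsum : ∀ θ, ∑ y, π θ y = 1)
    (hdiff : ∀ y, Differentiable ℝ (fun θ => π θ y))
    (θ : Fin d → ℝ) (u : Y → ℝ) (i : Fin G) :
    ∑ ys : Fin G → Y,
      ((∏ j, pold (ys j)) *
        ((π θ (ys i) / pold (ys i)) *
          (u (ys i) - (1 / (G : ℝ)) * ∑ j, u (ys j)))) •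
        fderiv ℝ (fun t => Real.log (π t (ys i))) θ
      = (((G : ℝ) - 1) / (G : ℝ)) •
          fderiv ℝ (fun t => ∑ y, π t y * u y) θ := by
  set v : Y → (Fin d → ℝ) →L[ℝ] ℝ := fun y => fderiv ℝ (fun t => π t y) θ
  have hscore : ∀ y, fderiv ℝ (fun t => Real.log (π t y)) θ = (π θ y)⁻¹ • v y := fun y =>
    fderiv.log (hdiff y θ) (hπpos θ y).ne'
  have hgrad : fderiv ℝ (fun t => ∑ y, π t y * u y) θ = ∑ y, u y • v y := by
    rw [fderiv_fun_sum fun y _ => (hdiff y θ).mul_const (u y)]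
    exact sum_congr rfl fun y _ => fderiv_mul_const (hdiff y θ) (u y)
  have hweight : ∀ y, pold y • (pold y)⁻¹ • v y = v y := fun y => by
    rw [smul_smul, mul_inv_cancel₀ (hpold y).ne', one_smul]
  have hw : ∑ y, pold y • (pold y)⁻¹ • v y = 0 := by
    simp only [hweight]
    exact sum_fderiv_eq_zero_of_sum_eq (fun y => hdiff y θ) hπsum
  have hsummand : ∀ ys : Fin G → Y,
      ((∏ j, pold (ys j)) * ((π θ (ys i) / pold (ys i)) *
          (u (ys i) - (1 / (G : ℝ)) * ∑ j, u (ys j)))) • ((π θ (ys i))⁻¹ • v (ys i))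
        = (∏ j, pold (ys j)) • ((u (ys i) - (1 / (G : ℝ)) * ∑ j, u (ys j)) •
            (pold (ys i))⁻¹ • v (ys i)) := fun ys => by
    simp only [smul_smul]
    congr 1
    field_simp [(hπpos θ (ys i)).ne', (hpold (ys i)).ne']
  have hbaseline := sum_prod_smul_sub_groupMean_smul hpsum hw u i
  simp only [Fintype.card_fin] at hbaseline
  simp only [hscore, hsummand, hbaseline, hgrad, smul_comm (pold _) (u _), hweight]

/-- MBR-gradient proportionality (Dr.GRPO): the expectation (over the i.i.d.
group) of the Dr.GRPO estimator at sample i equals ((G−1)/G) times the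
gradient of the expected utility under π_θ. -/
theorem drgrpo_gradient_proportionality {Y : Type*} [Fintype Y] {d : ℕ}
    (G : ℕ) (hG : 2 ≤ G)
    (pold : Y → ℝ) (hpold : ∀ y, 0 < pold y) (hpsum : ∑ y, pold y = 1)
    (π : (Fin d → ℝ) → Y → ℝ) (hπpos : ∀ θ y, 0 < π θ y)
    (hπsum : ∀ θ, ∑ y, π θ y = 1)
    (hdiff : ∀ y, Differentiable ℝ (fun θ => π θ y))
    (θ : Fin d → ℝ) (u : Y → ℝ) (i : Fin G) :
    ∑ ys : Fin G → Y,
      ((∏ j, pold (ys j)) *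
        ((π θ (ys i) / pold (ys i)) *
          (u (ys i) - (1 / (G : ℝ)) * ∑ j, u (ys j)))) •
        fderiv ℝ (fun t => Real.log (π t (ys i))) θ
      = (((G : ℝ) - 1) / (G : ℝ)) •
          fderiv ℝ (fun t => ∑ y, π t y * u y) θ :=
  drgrpo_gradient_proportionality_general G pold hpold hpsum π hπpos hπsum hdiff θ u i
end

section
/- Non-asymptotic convergence rate: Let L : ℝ^d → ℝ be differentiable with L-Lipschitz gradient and bounded above by L* ≤ 1. Suppose at each step t the stochastic gradient ĝ_t satisfies E_t[ĝ_t] = α∇L(θ_t) with a fixed α > 0 and E_t[‖ĝ_t‖²] ≤ α²‖∇L(θ_t)‖² + σ². Run θ_{t+1} = θ_t + η·ĝ_t with η = 1/√T, where T ≥ (Lα)². Then (1/T)·Σ_{t=1}^T E[‖∇L(θ_t)‖²] ≤ (2(L* − L(θ₁)) + Lσ²)/(α√T). -/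
/-!
Since the gradient is `L`-Lipschitz, one step `θ' = θ + η g` of stochastic gradient ascent gains
`f θ' ≥ f θ + η ⟪∇f θ, g⟫ - (L/2) η² ‖g‖²`. Conditioning on the past, the unbiasedness of `g`
turns `E⟪∇f θ, g⟫` into `α E‖∇f θ‖²` and the second-moment bound controls `E‖g‖²`, so every step
gains at least `(αη - Lα²η²/2) E‖∇f θ‖² - Lη²σ²/2`, where `αη - Lα²η²/2 ≥ αη/2` once
`T ≥ (Lα)²`. Summing over `T` steps, the total gain is at most `L* - f θ₁`, and `η = 1/√T` gives
the rate.
-/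

open MeasureTheory

section Descent

variable {E : Type*} [NormedAddCommGroup E] [InnerProductSpace ℝ E] [CompleteSpace E]
  {f : E → ℝ} {L : ℝ}

theorem add_inner_gradient_sub_le_of_lipschitz_gradient (hdiff : Differentiable ℝ f)
    (hlip : ∀ x y, ‖gradient f x - gradient f y‖ ≤ L * ‖x - y‖) (x y : E) :
    f x + inner ℝ (gradient f x) (y - x) - L / 2 * ‖y - x‖ ^ 2 ≤ f y := by
  set v := y - x
  set ψ : ℝ → ℝ := fun t => f (x + t • v) - t * inner ℝ (gradient f x) v + L / 2 * t ^ 2 * ‖v‖ ^ 2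
  have hψ : ∀ t, HasDerivAt ψ
      (inner ℝ (gradient f (x + t • v) - gradient f x) v + L * t * ‖v‖ ^ 2) t := by
    intro t
    have hline : HasDerivAt (fun s : ℝ => x + s • v) v t := by
      simpa using ((hasDerivAt_id t).smul_const v).const_add x
    have hf := (hdiff (x + t • v)).hasGradientAt.hasFDerivAt.comp_hasDerivAt t hline
    refine ((hf.sub ((hasDerivAt_id t).mul_const (inner ℝ (gradient f x) v))).add
      (((hasDerivAt_pow 2 t).const_mul (L / 2)).mul_const (‖v‖ ^ 2))).congr_deriv ?_
    simp only [InnerProductSpace.toDual_apply_apply, inner_sub_left, Nat.cast_ofNat]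
    ring
  have hmono : MonotoneOn ψ (Set.Ici 0) := by
    refine monotoneOn_of_hasDerivWithinAt_nonneg (convex_Ici 0)
      (fun t _ => (hψ t).continuousAt.continuousWithinAt)
      (fun t _ => (hψ t).hasDerivWithinAt) fun t ht => ?_
    rw [interior_Ici] at ht
    have hgrad : ‖gradient f (x + t • v) - gradient f x‖ ≤ L * (t * ‖v‖) := by
      simpa [norm_smul, abs_of_pos (Set.mem_Ioi.mp ht)] using hlip (x + t • v) x
    have hcs := abs_real_inner_le_norm (gradient f (x + t • v) - gradient f x) v
    linarith [(abs_le.mp hcs).1, mul_le_mul_of_nonneg_right hgrad (norm_nonneg v)]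
  have h01 := hmono Set.self_mem_Ici (Set.mem_Ici.mpr zero_le_one) zero_le_one
  have hxv : x + v = y := add_sub_cancel x y
  simp only [ψ, zero_smul, one_smul, add_zero, zero_mul, sub_zero, one_mul, one_pow, mul_one,
    ne_eq, OfNat.ofNat_ne_zero, not_false_eq_true, zero_pow, mul_zero, hxv] at h01
  linarith

end Descent

section CondExp

variable {Ω E : Type*} {m mΩ : MeasurableSpace Ω} {μ : Measure Ω}
  [NormedAddCommGroup E] [InnerProductSpace ℝ E] {g h : Ω → E}

theorem MeasureTheory.MemLp.integrable_inner (hh : MemLp h 2 μ) (hg : MemLp g 2 μ) :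
    Integrable (fun ω => inner ℝ (h ω) (g ω)) μ :=
  (hh.norm.integrable_mul hg.norm).mono (hh.1.inner hg.1) <| ae_of_all _ fun ω => by
    simpa using abs_real_inner_le_norm (h ω) (g ω)

theorem integral_inner_condExp_right [CompleteSpace E] (hm : m ≤ mΩ) [SigmaFinite (μ.trim hm)]
    (hh : AEStronglyMeasurable[m] h μ) (hhg : Integrable (fun ω => inner ℝ (h ω) (g ω)) μ)
    (hg : Integrable g μ) :
    ∫ ω, inner ℝ (h ω) (μ[g | m] ω) ∂μ = ∫ ω, inner ℝ (h ω) (g ω) ∂μ :=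
  (integral_congr_ae (condExp_bilin_of_aestronglyMeasurable_left
    (innerSL ℝ : E →L[ℝ] E →L[ℝ] ℝ) hh hhg hg)).symm.trans (integral_condExp hm)

theorem aestronglyMeasurable_of_condExp_ae_eq_smul [CompleteSpace E] {α : ℝ} (hα : α ≠ 0)
    (hcond : μ[g | m] =ᵐ[μ] fun ω => α • h ω) : AEStronglyMeasurable[m] h μ := by
  refine ((stronglyMeasurable_condExp.aestronglyMeasurable.congr hcond).const_smul α⁻¹).congr
    (ae_of_all _ fun ω => ?_)
  simp [smul_smul, inv_mul_cancel₀ hα]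

theorem integral_inner_eq_mul_integral_norm_sq_of_condExp_eq_smul [CompleteSpace E]
    [IsFiniteMeasure μ] (hm : m ≤ mΩ) {α : ℝ} (hα : α ≠ 0)
    (hcond : μ[g | m] =ᵐ[μ] fun ω => α • h ω) (hg : MemLp g 2 μ)
    (hh : Integrable (fun ω => ‖h ω‖ ^ 2) μ) :
    ∫ ω, inner ℝ (h ω) (g ω) ∂μ = α * ∫ ω, ‖h ω‖ ^ 2 ∂μ := by
  have hh_meas := aestronglyMeasurable_of_condExp_ae_eq_smul hα hcond
  have hh2 : MemLp h 2 μ := (memLp_two_iff_integrable_sq_norm (hh_meas.mono hm)).2 hh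
  rw [← integral_inner_condExp_right hm hh_meas (hh2.integrable_inner hg)
    (hg.integrable one_le_two), ← integral_const_mul]
  refine integral_congr_ae (hcond.mono fun ω hω => ?_)
  simp [hω, real_inner_smul_right]

theorem integral_le_integral_of_condExp_le (hm : m ≤ mΩ) [SigmaFinite (μ.trim hm)]
    {φ ψ : Ω → ℝ} (hψ : Integrable ψ μ) (hle : ∀ᵐ ω ∂μ, μ[φ | m] ω ≤ ψ ω) :
    ∫ ω, φ ω ∂μ ≤ ∫ ω, ψ ω ∂μ :=
  (integral_condExp hm).symm.trans_le (integral_mono_ae integrable_condExp hψ hle)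

end CondExp

section StochasticGradientAscent

variable {Ω E : Type*} {m mΩ : MeasurableSpace Ω} {μ : Measure Ω} [IsProbabilityMeasure μ]
  [NormedAddCommGroup E] [InnerProductSpace ℝ E] [CompleteSpace E]
  {f : E → ℝ} {L α σ2 η : ℝ} {x y g : Ω → E}

theorem integral_sub_le_of_stochastic_gradient_step (hm : m ≤ mΩ) (hL : 0 ≤ L) (hα : α ≠ 0)
    (hdiff : Differentiable ℝ f)
    (hlip : ∀ x y, ‖gradient f x - gradient f y‖ ≤ L * ‖x - y‖)
    (hstep : ∀ ω, y ω = x ω + η • g ω) (hg : MemLp g 2 μ)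
    (hfx : Integrable (fun ω => f (x ω)) μ) (hfy : Integrable (fun ω => f (y ω)) μ)
    (hgrad : Integrable (fun ω => ‖gradient f (x ω)‖ ^ 2) μ)
    (hmean : μ[g | m] =ᵐ[μ] fun ω => α • gradient f (x ω))
    (hsecond : ∀ᵐ ω ∂μ, μ[fun ω' => ‖g ω'‖ ^ 2 | m] ω ≤ α ^ 2 * ‖gradient f (x ω)‖ ^ 2 + σ2) :
    (η * α - L / 2 * η ^ 2 * α ^ 2) * ∫ ω, ‖gradient f (x ω)‖ ^ 2 ∂μ - L / 2 * η ^ 2 * σ2 ≤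
      ∫ ω, f (y ω) ∂μ - ∫ ω, f (x ω) ∂μ := by
  have hg2 : Integrable (fun ω => ‖g ω‖ ^ 2) μ := hg.integrable_norm_pow two_ne_zero
  have hinner : Integrable (fun ω => inner ℝ (gradient f (x ω)) (g ω)) μ :=
    ((memLp_two_iff_integrable_sq_norm ((aestronglyMeasurable_of_condExp_ae_eq_smul hα
      hmean).mono hm)).2 hgrad).integrable_inner hg
  have hcorr := integral_inner_eq_mul_integral_norm_sq_of_condExp_eq_smul hm hα hmean hg hgrad
  have hmoment : ∫ ω, ‖g ω‖ ^ 2 ∂μ ≤ α ^ 2 * ∫ ω, ‖gradient f (x ω)‖ ^ 2 ∂μ + σ2 := by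
    refine (integral_le_integral_of_condExp_le hm ((hgrad.const_mul _).fun_add
      (integrable_const σ2)) hsecond).trans_eq ?_
    rw [integral_add (hgrad.const_mul _) (integrable_const σ2), integral_const_mul]
    simp
  have hgain : ∫ ω, f (x ω) ∂μ + η * ∫ ω, inner ℝ (gradient f (x ω)) (g ω) ∂μ
      - L / 2 * η ^ 2 * ∫ ω, ‖g ω‖ ^ 2 ∂μ ≤ ∫ ω, f (y ω) ∂μ := by
    have hint := (hfx.fun_add (hinner.const_mul η)).sub' (hg2.const_mul (L / 2 * η ^ 2))
    rw [← integral_const_mul, ← integral_const_mul, ← integral_add hfx (hinner.const_mul η),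
      ← integral_sub (hfx.fun_add (hinner.const_mul η)) (hg2.const_mul _)]
    refine integral_mono hint hfy fun ω => ?_
    have := add_inner_gradient_sub_le_of_lipschitz_gradient hdiff hlip (x ω) (y ω)
    rw [hstep ω, add_sub_cancel_left, real_inner_smul_right, norm_smul, mul_pow,
      Real.norm_eq_abs, sq_abs] at this
    simp only [hstep ω]
    linarith
  have := mul_le_mul_of_nonneg_left hmoment (by positivity : 0 ≤ L / 2 * η ^ 2)
  rw [hcorr] at hgain
  linarith

end StochasticGradientAscent

theorem mul_sum_range_sub_le_of_forall_le_sub {A S : ℕ → ℝ} {c b : ℝ}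
    (h : ∀ t, c * S t - b ≤ A (t + 1) - A t) (T : ℕ) :
    c * ∑ t ∈ Finset.range T, S t - T * b ≤ A T - A 0 := by
  have := Finset.sum_le_sum fun t (_ : t ∈ Finset.range T) => h t
  rwa [Finset.sum_range_sub A, Finset.sum_sub_distrib, ← Finset.mul_sum, Finset.sum_const,
    Finset.card_range, nsmul_eq_mul] at this

theorem one_div_mul_le_of_step_eq_inv_sqrt {L α σ2 D S T η : ℝ} (hT : 0 < T) (hα : 0 < α)
    (hTlarge : (L * α) ^ 2 ≤ T) (hη : η = 1 / √T) (hS : 0 ≤ S)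
    (h : (η * α - L / 2 * η ^ 2 * α ^ 2) * S - T * (L / 2 * η ^ 2 * σ2) ≤ D) :
    1 / T * S ≤ (2 * D + L * σ2) / (α * √T) := by
  obtain ⟨s, hs, rfl⟩ : ∃ s, 0 < s ∧ T = s ^ 2 := ⟨√T, by positivity, (Real.sq_sqrt hT.le).symm⟩
  rw [Real.sqrt_sq hs.le] at hη ⊢
  subst hη
  have hLα : L * α ≤ s := (abs_le_of_sq_le_sq' hTlarge hs.le).2
  rw [one_div_mul_eq_div, div_le_div_iff₀ (by positivity) (by positivity)]
  field_simp at h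
  have hLαS : L * α * (α * S) ≤ s * (α * S) := mul_le_mul_of_nonneg_right hLα (by positivity)
  linarith

open MeasureTheory in
theorem nonasymptotic_convergence_rate_general {d : ℕ} {Ω : Type*} [MeasurableSpace Ω]
    (μ : Measure Ω) [IsProbabilityMeasure μ]
    (f : EuclideanSpace ℝ (Fin d) → ℝ) (L : ℝ) (hL : 0 < L)
    (hdiff : Differentiable ℝ f)
    (hlip : ∀ x y, ‖gradient f x - gradient f y‖ ≤ L * ‖x - y‖)
    (Lstar : ℝ) (hbound : ∀ x, f x ≤ Lstar)
    (T : ℕ) (hT : 1 ≤ T)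
    (α σ2 : ℝ) (hα : 0 < α) (hTlarge : ((L * α) ^ 2 : ℝ) ≤ (T : ℝ))
    (η : ℝ) (hη : η = 1 / Real.sqrt T)
    (ℱ : ℕ → MeasurableSpace Ω) (hℱ : ∀ t, ℱ t ≤ ‹MeasurableSpace Ω›)
    (θ : ℕ → Ω → EuclideanSpace ℝ (Fin d))
    (g : ℕ → Ω → EuclideanSpace ℝ (Fin d))
    (θ₁ : EuclideanSpace ℝ (Fin d)) (hθ0 : θ 0 = fun _ => θ₁)
    (hupdate : ∀ t ω, θ (t + 1) ω = θ t ω + η • g t ω)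
    (hgint : ∀ t, Integrable (g t) μ)
    (hg2int : ∀ t, Integrable (fun ω => ‖g t ω‖ ^ 2) μ)
    (hfint : ∀ t, Integrable (fun ω => f (θ t ω)) μ)
    (hgradint : ∀ t, Integrable (fun ω => ‖gradient f (θ t ω)‖ ^ 2) μ)
    (hmean : ∀ t, μ[g t | ℱ t] =ᵐ[μ] fun ω => α • gradient f (θ t ω))
    (hsecond : ∀ t, ∀ᵐ ω ∂μ,
      (μ[fun ω' => ‖g t ω'‖ ^ 2 | ℱ t]) ω
        ≤ α ^ 2 * ‖gradient f (θ t ω)‖ ^ 2 + σ2) :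
    (1 / (T : ℝ)) * ∑ t ∈ Finset.range T, ∫ ω, ‖gradient f (θ t ω)‖ ^ 2 ∂μ
      ≤ (2 * (Lstar - f θ₁) + L * σ2) / (α * Real.sqrt T) := by
  have hstep (t : ℕ) := integral_sub_le_of_stochastic_gradient_step (hℱ t) hL.le hα.ne' hdiff hlip
    (hupdate t) ((memLp_two_iff_integrable_sq_norm (hgint t).1).2 (hg2int t)) (hfint t)
    (hfint (t + 1)) (hgradint t) (hmean t) (hsecond t)
  have hsum := mul_sum_range_sub_le_of_forall_le_sub
    (A := fun t => ∫ ω, f (θ t ω) ∂μ) hstep T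
  have hstart : ∫ ω, f (θ 0 ω) ∂μ = f θ₁ := by simp [hθ0]
  have hend : ∫ ω, f (θ T ω) ∂μ ≤ Lstar := by
    simpa using integral_mono (hfint T) (integrable_const Lstar) fun ω => hbound (θ T ω)
  exact one_div_mul_le_of_step_eq_inv_sqrt (by exact_mod_cast hT) hα hTlarge hη
    (Finset.sum_nonneg fun t _ => integral_nonneg fun ω => by positivity)
    (by linarith)

open MeasureTheory in
/-- Non-asymptotic convergence rate for stochastic gradient ascent with
conditionally unbiased (up to a positive scale α) gradients. -/
theorem nonasymptotic_convergence_rate {d : ℕ} {Ω : Type*} [MeasurableSpace Ω]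
    (μ : Measure Ω) [IsProbabilityMeasure μ]
    (f : EuclideanSpace ℝ (Fin d) → ℝ) (L : ℝ) (hL : 0 < L)
    (hdiff : Differentiable ℝ f)
    (hlip : ∀ x y, ‖gradient f x - gradient f y‖ ≤ L * ‖x - y‖)
    (Lstar : ℝ) (hLstar1 : Lstar ≤ 1) (hbound : ∀ x, f x ≤ Lstar)
    (T : ℕ) (hT : 1 ≤ T)
    (α σ2 : ℝ) (hα : 0 < α) (hTlarge : ((L * α) ^ 2 : ℝ) ≤ (T : ℝ))
    (η : ℝ) (hη : η = 1 / Real.sqrt T)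
    (ℱ : ℕ → MeasurableSpace Ω) (hℱ : ∀ t, ℱ t ≤ ‹MeasurableSpace Ω›)
    (θ : ℕ → Ω → EuclideanSpace ℝ (Fin d))
    (g : ℕ → Ω → EuclideanSpace ℝ (Fin d))
    (θ₁ : EuclideanSpace ℝ (Fin d)) (hθ0 : θ 0 = fun _ => θ₁)
    (hupdate : ∀ t ω, θ (t + 1) ω = θ t ω + η • g t ω)
    (hgint : ∀ t, Integrable (g t) μ)
    (hg2int : ∀ t, Integrable (fun ω => ‖g t ω‖ ^ 2) μ)
    (hfint : ∀ t, Integrable (fun ω => f (θ t ω)) μ)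
    (hgradint : ∀ t, Integrable (fun ω => ‖gradient f (θ t ω)‖ ^ 2) μ)
    (hmean : ∀ t, μ[g t | ℱ t] =ᵐ[μ] fun ω => α • gradient f (θ t ω))
    (hsecond : ∀ t, ∀ᵐ ω ∂μ,
      (μ[fun ω' => ‖g t ω'‖ ^ 2 | ℱ t]) ω
        ≤ α ^ 2 * ‖gradient f (θ t ω)‖ ^ 2 + σ2) :
    (1 / (T : ℝ)) * ∑ t ∈ Finset.range T, ∫ ω, ‖gradient f (θ t ω)‖ ^ 2 ∂μ
      ≤ (2 * (Lstar - f θ₁) + L * σ2) / (α * Real.sqrt T) :=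
  nonasymptotic_convergence_rate_general μ f L hL hdiff hlip Lstar hbound T hT α σ2 hα hTlarge η hη
    ℱ hℱ θ g θ₁ hθ0 hupdate hgint hg2int hfint hgradint hmean hsecond
end
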